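/- If (u,p,v,π) ∈ ℝ^{2(p+q)} satisfies H₁ = H₂ = D = 0, is not the origin, and the pair (u,p) is linearly dependent, then the pair (v,π) is also linearly dependent. Moreover (u,p) ≠ (0,0) and (v,π) ≠ (0,0). -/

import Mathlib

/-!
Write `⬝` for the dot product. The constraints say `p⬝p = v⬝v`, `π⬝π = u⬝u` and `u⬝p = v⬝π`,
so the Gram determinants `(u⬝u)(p⬝p) - (u⬝p)²` and `(v⬝v)(π⬝π) - (v⬝π)²` agree. A pair of
vectors is linearly dependent exactly when its Gram determinant vanishes, hence dependence
transfers from `(u, p)` to `(v, π)`. The same identities show that `(u, p)` vanishes iff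
`(v, π)` does, so neither pair can vanish away from the origin.
-/

open scoped BigOperators

namespace Stmt6

abbrev Phase (np nq : ℕ) := (Fin np → ℝ) × (Fin np → ℝ) × (Fin nq → ℝ) × (Fin nq → ℝ)

variable {np nq : ℕ}

noncomputable def H1 (x : Phase np nq) : ℝ :=
  (1/2) * ((∑ i, (x.2.1 i)^2) - ∑ j, (x.2.2.1 j)^2)

noncomputable def H2 (x : Phase np nq) : ℝ :=
  (1/2) * ((∑ j, (x.2.2.2 j)^2) - ∑ i, (x.1 i)^2)

noncomputable def Dc (x : Phase np nq) : ℝ :=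
  (∑ i, x.1 i * x.2.1 i) - ∑ j, x.2.2.1 j * x.2.2.2 j

section Gram

variable {R ι : Type*} [Fintype ι]

theorem gram_eq_zero_of_dependent [CommRing R] [IsDomain R] {u p : ι → R} {a b : R}
    (hab : (a, b) ≠ (0, 0)) (h : a • u + b • p = 0) :
    (u ⬝ᵥ u) * (p ⬝ᵥ p) = (u ⬝ᵥ p) ^ 2 := by
  have hu : a * (u ⬝ᵥ u) + b * (u ⬝ᵥ p) = 0 := by
    simpa [dotProduct_add, dotProduct_comm p u] using congrArg (u ⬝ᵥ ·) h
  have hp : a * (u ⬝ᵥ p) + b * (p ⬝ᵥ p) = 0 := by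
    simpa [dotProduct_add, dotProduct_comm u p] using congrArg (p ⬝ᵥ ·) h
  -- `(a, b)` lies in the kernel of the Gram matrix, so both `a` and `b` annihilate its determinant.
  have ha : a * ((u ⬝ᵥ u) * (p ⬝ᵥ p) - (u ⬝ᵥ p) ^ 2) = 0 := by
    linear_combination (p ⬝ᵥ p) * hu - (u ⬝ᵥ p) * hp
  have hb : b * ((u ⬝ᵥ u) * (p ⬝ᵥ p) - (u ⬝ᵥ p) ^ 2) = 0 := by
    linear_combination (u ⬝ᵥ u) * hp - (u ⬝ᵥ p) * hu
  rcases mul_eq_zero.1 ha with ha0 | hG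
  · rcases mul_eq_zero.1 hb with hb0 | hG
    · exact absurd (by rw [ha0, hb0]) hab
    · exact sub_eq_zero.1 hG
  · exact sub_eq_zero.1 hG

theorem exists_dependent_of_gram_eq_zero [CommRing R] [LinearOrder R] [IsStrictOrderedRing R]
    {v w : ι → R} (h : (v ⬝ᵥ v) * (w ⬝ᵥ w) = (v ⬝ᵥ w) ^ 2) :
    ∃ a b : R, (a, b) ≠ (0, 0) ∧ a • v + b • w = 0 := by
  by_cases hv : v = 0
  · exact ⟨1, 0, by simp, by simp [hv]⟩
  refine ⟨v ⬝ᵥ w, -(v ⬝ᵥ v), by simp [dotProduct_self_eq_zero, hv], ?_⟩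
  -- The squared length of this combination is `(v⬝v)` times the Gram determinant.
  rw [← dotProduct_self_eq_zero]
  simp only [dotProduct_add, add_dotProduct, dotProduct_smul, smul_dotProduct, smul_eq_mul,
    dotProduct_comm w v]
  linear_combination (v ⬝ᵥ v) * h

theorem eq_zero_iff_eq_zero_of_dotProduct_self_eq [CommRing R] [LinearOrder R]
    [IsStrictOrderedRing R] {κ : Type*} [Fintype κ] {u p : ι → R} {v w : κ → R}
    (hp : p ⬝ᵥ p = v ⬝ᵥ v) (hw : w ⬝ᵥ w = u ⬝ᵥ u) :
    (u, p) = 0 ↔ (v, w) = 0 := by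
  simp only [Prod.mk_eq_zero, ← dotProduct_self_eq_zero (v := u),
    ← dotProduct_self_eq_zero (v := p), ← dotProduct_self_eq_zero (v := v),
    ← dotProduct_self_eq_zero (v := w), hp, hw]
  tauto

end Gram

theorem H1_eq_zero_iff (x : Phase np nq) : H1 x = 0 ↔ x.2.1 ⬝ᵥ x.2.1 = x.2.2.1 ⬝ᵥ x.2.2.1 := by
  simp only [H1, dotProduct, sq]
  constructor <;> intro h <;> linarith

theorem H2_eq_zero_iff (x : Phase np nq) : H2 x = 0 ↔ x.2.2.2 ⬝ᵥ x.2.2.2 = x.1 ⬝ᵥ x.1 := by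
  simp only [H2, dotProduct, sq]
  constructor <;> intro h <;> linarith

theorem Dc_eq_zero_iff (x : Phase np nq) : Dc x = 0 ↔ x.1 ⬝ᵥ x.2.1 = x.2.2.1 ⬝ᵥ x.2.2.2 := by
  simp only [Dc, dotProduct]
  exact sub_eq_zero

theorem exceptional_structure (x : Phase np nq)
    (h1 : H1 x = 0) (h2 : H2 x = 0) (hD : Dc x = 0)
    (hx : x ≠ 0)
    (hdep : ∃ a b : ℝ, (a, b) ≠ (0, 0) ∧ a • x.1 + b • x.2.1 = 0) :
    (∃ a b : ℝ, (a, b) ≠ (0, 0) ∧ a • x.2.2.1 + b • x.2.2.2 = 0) ∧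
    (x.1, x.2.1) ≠ (0, 0) ∧
    (x.2.2.1, x.2.2.2) ≠ (0, 0) := by
  obtain ⟨u, p, v, w⟩ := x
  rw [H1_eq_zero_iff] at h1
  rw [H2_eq_zero_iff] at h2
  rw [Dc_eq_zero_iff] at hD
  obtain ⟨a, b, hab, hlin⟩ := hdep
  have hgram_up := gram_eq_zero_of_dependent hab hlin
  have hgram_vw : (v ⬝ᵥ v) * (w ⬝ᵥ w) = (v ⬝ᵥ w) ^ 2 := by
    rw [← h1, h2, ← hD, mul_comm, hgram_up]
  have hzero := eq_zero_iff_eq_zero_of_dotProduct_self_eq h1 h2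
  have hne : ¬((u, p) = 0 ∧ (v, w) = 0) := fun h => hx (by simp_all)
  exact ⟨exists_dependent_of_gram_eq_zero hgram_vw, fun h => hne ⟨h, hzero.1 h⟩,
    fun h => hne ⟨hzero.2 h, h⟩⟩

end Stmt6
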